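/- arXiv:1908.00579 — 5 statements merged into one kernel-verified Lean document; each statement's English description precedes it below -/
import Mathlib

section
/- Let Λ ⊆ G be weakly uniformly discrete in a σ-compact locally compact Abelian group G, let f ∈ C_c(G) be nonnegative with ∫ f = 1 and K = supp(f), and let C = ‖f * δ_Λ‖_∞. Then for every compact set A ⊆ G and every x ∈ G, card(Λ ∩ (x + A)) ≤ C · vol(A + K). -/
open MeasureTheory Pointwise

/-- For `Λ` weakly uniformly discrete, `f ∈ C_c(G)` nonnegative with `∫ f = 1`,
`K = supp f` and `C = ‖f * δ_Λ‖_∞`, one has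
`card(Λ ∩ (x + A)) ≤ C · vol(A + K)` for every compact `A` and every `x`. -/
theorem card_inter_translate_le
    {G : Type*} [AddCommGroup G] [TopologicalSpace G] [IsTopologicalAddGroup G]
    [LocallyCompactSpace G] [SigmaCompactSpace G] [MeasurableSpace G] [BorelSpace G]
    (vol : Measure G) [vol.IsAddHaarMeasure]
    (Λ : Set G)
    (hwud : ∀ K : Set G, IsCompact K → ∃ N : ℕ, ∀ x : G,
      (Λ ∩ (fun k => x + k) '' K).Finite ∧ (Λ ∩ (fun k => x + k) '' K).ncard ≤ N)
    (f : G → ℝ) (hf0 : ∀ x, 0 ≤ f x) (hfc : Continuous f) (hfs : HasCompactSupport f)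
    (hint : ∫ x, f x ∂vol = 1)
    (C : ℝ) (hC : ∀ y : G, ∑' t : Λ, f (y - ↑t) ≤ C) :
    ∀ A : Set G, IsCompact A → ∀ x : G,
      ((Λ ∩ (fun a => x + a) '' A).ncard : ℝ) ≤ C * (vol (A + tsupport f)).toReal := by
  intro A hA x
  classical
  set K : Set G := tsupport f with hKdef
  have hK : IsCompact K := hfs
  have hKcl : IsClosed K := isClosed_tsupport f
  -- the finite set of lattice points in x + A
  set F : Set G := Λ ∩ (fun a => x + a) '' A with hFdef
  obtain ⟨N, hN⟩ := hwud A hA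
  have hF : F.Finite := (hN x).1
  -- as a subset of the subtype Λ
  have hF' : (Subtype.val ⁻¹' F : Set ↥Λ).Finite :=
    hF.preimage (Subtype.val_injective.injOn)
  set s : Finset ↥Λ := hF'.toFinset with hsdef
  have hFcard : (F.ncard : ℝ) = (s.card : ℝ) := by
    have himg : Subtype.val '' (Subtype.val ⁻¹' F : Set ↥Λ) = F := by
      apply Set.image_preimage_eq_of_subset
      rw [Subtype.range_coe]
      exact Set.inter_subset_left
    rw [← himg, Set.ncard_image_of_injective _ Subtype.val_injective,
      ← hF'.coe_toFinset, Set.ncard_coe_finset]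
  -- the finite sum function
  set g : G → ℝ := fun y => ∑ t ∈ s, f (y - (t : G)) with hgdef
  -- each translate is integrable
  have hfint : Integrable f vol := hfc.integrable_of_hasCompactSupport hfs
  have htint : ∀ t : G, Integrable (fun y => f (y - t)) vol := fun t =>
    hfint.comp_sub_right t
  -- card = integral of g
  have hcard : (s.card : ℝ) = ∫ y, g y ∂vol := by
    rw [hgdef, integral_finset_sum s (fun t _ => htint (t : G))]
    have : ∀ t ∈ s, ∫ y, f (y - (t : G)) ∂vol = 1 := fun t _ => by
      rw [integral_sub_right_eq_self f (t : G), hint]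
    rw [Finset.sum_congr rfl this, Finset.sum_const]
    simp
  -- the target set
  set S : Set G := (fun a => x + a) '' (A + K) with hSdef
  have hSK : IsCompact S := (hA.add hK).image (continuous_add_left x)
  have hScl : IsClosed S := by
    have : IsClosed (A + K) := hKcl.add_left_of_isCompact hA
    exact (Homeomorph.addLeft x).isClosedMap _ this
  have hSm : MeasurableSet S := hScl.measurableSet
  -- g vanishes outside S
  have hg0 : ∀ y ∉ S, g y = 0 := by
    intro y hy
    apply Finset.sum_eq_zero
    intro t ht
    by_contra hne
    have htF : (t : G) ∈ F := by
      have := (hF'.mem_toFinset).1 ht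
      exact this
    obtain ⟨-, a, ha, hta⟩ := htF
    have hta' : x + a = (t : G) := hta
    have hyK : y - (t : G) ∈ K := subset_tsupport f hne
    refine hy ⟨a + (y - (t : G)), Set.add_mem_add ha hyK, ?_⟩
    show x + (a + (y - (t : G))) = y
    rw [← add_assoc, hta', add_comm, sub_add_cancel]
  -- g is bounded by the indicator of S with value C
  have hgle : ∀ y, g y ≤ S.indicator (fun _ => C) y := by
    intro y
    by_cases hy : y ∈ S
    · rw [Set.indicator_of_mem hy]
      -- summability: finitely many nonzero terms
      obtain ⟨M, hM⟩ := hwud (-K) hK.neg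
      have hfin : ((Λ ∩ (fun k => y + k) '' (-K))).Finite := (hM y).1
      have hfin' : (Subtype.val ⁻¹' (Λ ∩ (fun k => y + k) '' (-K)) : Set ↥Λ).Finite :=
        hfin.preimage (Subtype.val_injective.injOn)
      have hsum : Summable (fun t : ↥Λ => f (y - (t : G))) := by
        apply summable_of_ne_finset_zero (s := hfin'.toFinset)
        intro t ht
        by_contra hne
        apply ht
        rw [Set.Finite.mem_toFinset]
        refine ⟨t.2, -(y - (t : G)), Set.neg_mem_neg.2 (subset_tsupport f hne), ?_⟩
        show y + -(y - (t : G)) = (t : G)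
        rw [← sub_eq_add_neg, sub_sub_cancel]
      calc g y ≤ ∑' t : ↥Λ, f (y - (t : G)) :=
            Summable.sum_le_tsum s (fun t _ => hf0 _) hsum
        _ ≤ C := hC y
    · rw [Set.indicator_of_notMem hy, hg0 y hy]
  -- integrate the bound
  have hgint : Integrable g vol := integrable_finset_sum s (fun t _ => htint (t : G))
  have hindint : Integrable (S.indicator (fun _ => C)) vol := by
    rw [integrable_indicator_iff hSm]
    exact integrableOn_const hSK.measure_lt_top.ne
  have hle : ∫ y, g y ∂vol ≤ ∫ y, S.indicator (fun _ => C) y ∂vol :=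
    integral_mono hgint hindint hgle
  have hind : ∫ y, S.indicator (fun _ => C) y ∂vol = (vol S).toReal * C := by
    rw [integral_indicator_const C hSm]; simp [smul_eq_mul, measureReal_def]
  have hvolS : vol S = vol (A + K) := by
    rw [hSdef, Set.image_add_left, measure_preimage_add]
  calc (F.ncard : ℝ) = (s.card : ℝ) := hFcard
    _ = ∫ y, g y ∂vol := hcard
    _ ≤ (vol S).toReal * C := by rw [← hind]; exact hle
    _ = C * (vol (A + K)).toReal := by rw [hvolS, mul_comm]
end

section
/- Let G be a σ-compact locally compact Abelian group and Λ ⊆ G a weakly uniformly discrete point set. Then for every van Hove sequence A = {A_n} in G, the uniform upper density uudens_A(Λ) = limsup_n sup_{x∈G} card(Λ ∩ (x + A_n))/vol(A_n) is finite, and it is bounded by C = ‖f * δ_Λ‖_∞ for any nonnegative f ∈ C_c(G) with ∫ f = 1. -/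
open MeasureTheory Pointwise Filter

/-- The `K`-boundary `∂^K A = closure((A+K) \ A) ∪ (A ∩ (closure Aᶜ − K))`. -/
def kBoundary {G : Type*} [AddCommGroup G] [TopologicalSpace G] (K A : Set G) : Set G :=
  closure ((A + K) \ A) ∪ (A ∩ (closure Aᶜ - K))

/-- A van Hove sequence. -/
def IsVanHove {G : Type*} [AddCommGroup G] [TopologicalSpace G] [MeasurableSpace G]
    (vol : Measure G) (A : ℕ → Set G) : Prop :=
  (∀ n, IsCompact (A n)) ∧ (∀ n, A n ⊆ interior (A (n + 1))) ∧ (⋃ n, A n) = Set.univ ∧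
    ∀ K : Set G, IsCompact K →
      Tendsto (fun n => (vol (kBoundary K (A n))).toReal / (vol (A n)).toReal) atTop (nhds 0)

/-- The uniform upper density of `Λ` with respect to the van Hove sequence `A`. -/
noncomputable def uudens {G : Type*} [AddCommGroup G] [TopologicalSpace G] [MeasurableSpace G]
    (vol : Measure G) (A : ℕ → Set G) (Λ : Set G) : ENNReal :=
  Filter.limsup
    (fun n => ⨆ x : G, ((Λ ∩ (fun a => x + a) '' A n).ncard : ENNReal) / vol (A n)) atTop

lemma aux_card_le
    {G : Type*} [AddCommGroup G] [TopologicalSpace G] [IsTopologicalAddGroup G]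
    [LocallyCompactSpace G] [MeasurableSpace G] [BorelSpace G]
    (vol : Measure G) [vol.IsAddHaarMeasure]
    (Λ : Set G)
    (hwud : ∀ K : Set G, IsCompact K → ∃ N : ℕ, ∀ x : G,
      (Λ ∩ (fun k => x + k) '' K).Finite ∧ (Λ ∩ (fun k => x + k) '' K).ncard ≤ N)
    (f : G → ℝ) (hf0 : ∀ x, 0 ≤ f x) (hfc : Continuous f) (hfs : HasCompactSupport f)
    (hint : ∫ x, f x ∂vol = 1)
    (C : ℝ) (hC : ∀ y : G, ∑' t : Λ, f (y - ↑t) ≤ C)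
    (B : Set G) (hB : IsCompact B) (x : G) :
    ((Λ ∩ (fun a => x + a) '' B).ncard : ℝ) ≤ C * (vol (B + tsupport f)).toReal := by
  classical
  set S := Λ ∩ (fun a => x + a) '' B with hSdef
  obtain ⟨N, hN⟩ := hwud B hB
  have hS : S.Finite := (hN x).1
  have hSΛ : S ⊆ Λ := Set.inter_subset_left
  have hSpre : (Subtype.val ⁻¹' S : Set Λ).Finite :=
    hS.preimage (Subtype.val_injective.injOn)
  set s : Finset Λ := hSpre.toFinset with hsdef
  have hmap : s.map ⟨Subtype.val, Subtype.val_injective⟩ = hS.toFinset := by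
    ext a
    simp only [Finset.mem_map, Set.Finite.mem_toFinset, hsdef, Function.Embedding.coeFn_mk,
      Set.mem_preimage]
    constructor
    · rintro ⟨t, ht, rfl⟩; exact ht
    · intro ha; exact ⟨⟨a, hSΛ ha⟩, ha, rfl⟩
  have hcard : S.ncard = s.card := by
    rw [Set.ncard_eq_toFinset_card S hS, ← hmap, Finset.card_map]
  have hfi : Integrable f vol := hfc.integrable_of_hasCompactSupport hfs
  have hfit : ∀ t : Λ, Integrable (fun y => f (y - (t : G))) vol := fun t =>
    hfi.comp_sub_right _
  set K := tsupport f with hK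
  have hKc : IsCompact K := hfs
  -- pointwise bound: ∑ over s ≤ C
  have hpt : ∀ y : G, ∑ t ∈ s, f (y - (t : G)) ≤ C := by
    intro y
    have hsupp : {t : Λ | f (y - (t : G)) ≠ 0}.Finite := by
      obtain ⟨M, hM⟩ := hwud (-K) hKc.neg
      have h1 : (Λ ∩ (fun k => y + k) '' (-K)).Finite := (hM y).1
      have hsub : {t : Λ | f (y - (t : G)) ≠ 0} ⊆
          Subtype.val ⁻¹' (Λ ∩ (fun k => y + k) '' (-K)) := by
        rintro ⟨t, htΛ⟩ ht
        simp only [Set.mem_preimage]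
        refine ⟨htΛ, -(y - t), ?_, ?_⟩
        · simp only [Set.mem_neg, neg_neg]
          exact subset_tsupport f ht
        · show y + -(y - t) = t
          abel
      exact Set.Finite.subset (h1.preimage (Subtype.val_injective.injOn)) hsub
    have hsum : Summable (fun t : Λ => f (y - (t : G))) := by
      refine summable_of_ne_finset_zero (s := hsupp.toFinset) (fun t ht => ?_)
      simp only [Set.Finite.mem_toFinset, Set.mem_setOf_eq, not_not] at ht
      exact ht
    exact le_trans (Summable.sum_le_tsum s (fun t _ => hf0 _) hsum) (hC y)
  set F : G → ℝ := fun y => ∑ t ∈ s, f (y - (t : G)) with hFdef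
  set T : Set G := (fun a => x + a) '' (B + K) with hTdef
  have hTc : IsCompact T := (hB.add hKc).image (continuous_add_left x)
  have hFT : ∀ y ∉ T, F y = 0 := by
    intro y hy
    apply Finset.sum_eq_zero
    intro t ht
    by_contra hne
    apply hy
    have htS : (t : G) ∈ S := by simpa [hsdef] using ht
    obtain ⟨-, b, hb, hbt⟩ := htS
    have hbt' : x + b = (t : G) := hbt
    have hyk : y - (t : G) ∈ K := subset_tsupport f hne
    refine ⟨b + (y - (t : G)), Set.add_mem_add hb hyk, ?_⟩
    show x + (b + (y - (t : G))) = y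
    rw [← hbt']
    abel
  set U : Set G := toMeasurable vol T with hUdef
  have hUmeas : MeasurableSet U := measurableSet_toMeasurable vol T
  have hUvol : vol U = vol T := measure_toMeasurable T
  have hvolT : vol T = vol (B + K) := by
    have hTeq : T = (fun h => -x + h) ⁻¹' (B + K) := by
      ext y
      simp only [hTdef, Set.mem_image, Set.mem_preimage]
      constructor
      · rintro ⟨a, ha, rfl⟩; simpa using ha
      · intro h; exact ⟨-x + y, h, by abel⟩
    rw [hTeq, measure_preimage_add]
  have hUlt : vol U < ⊤ := by rw [hUvol, hvolT]; exact (hB.add hKc).measure_lt_top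
  have hFle : ∀ y, F y ≤ U.indicator (fun _ => C) y := by
    intro y
    by_cases hy : y ∈ U
    · rw [Set.indicator_of_mem hy]; exact hpt y
    · rw [Set.indicator_of_notMem hy, hFT y (fun h => hy (subset_toMeasurable vol T h))]
  have hFi : Integrable F vol := integrable_finset_sum s (fun t _ => hfit t)
  have hIi : Integrable (U.indicator (fun _ => C)) vol := by
    rw [integrable_indicator_iff hUmeas]
    exact integrableOn_const hUlt.ne
  have hintF : ∫ y, F y ∂vol = (S.ncard : ℝ) := by
    rw [hFdef, integral_finset_sum s (fun t _ => hfit t)]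
    simp only [integral_sub_right_eq_self f, hint]
    simp [hcard]
  calc ((S.ncard : ℕ) : ℝ) = ∫ y, F y ∂vol := hintF.symm
    _ ≤ ∫ y, U.indicator (fun _ => C) y ∂vol := integral_mono hFi hIi hFle
    _ = (vol U).toReal * C := by rw [integral_indicator_const C hUmeas]; simp [Measure.real]
    _ = C * (vol (B + K)).toReal := by rw [hUvol, hvolT, mul_comm]


/-- For a weakly uniformly discrete point set `Λ`, the uniform upper density with respect
to any van Hove sequence is finite, bounded by `C = ‖f * δ_Λ‖_∞` for any nonnegative
`f ∈ C_c(G)` with `∫ f = 1`. -/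
theorem uudens_le_of_weakly_uniformly_discrete
    {G : Type*} [AddCommGroup G] [TopologicalSpace G] [IsTopologicalAddGroup G]
    [LocallyCompactSpace G] [SigmaCompactSpace G] [MeasurableSpace G] [BorelSpace G]
    (vol : Measure G) [vol.IsAddHaarMeasure]
    (Λ : Set G)
    (hwud : ∀ K : Set G, IsCompact K → ∃ N : ℕ, ∀ x : G,
      (Λ ∩ (fun k => x + k) '' K).Finite ∧ (Λ ∩ (fun k => x + k) '' K).ncard ≤ N)
    (A : ℕ → Set G) (hA : IsVanHove vol A)
    (f : G → ℝ) (hf0 : ∀ x, 0 ≤ f x) (hfc : Continuous f) (hfs : HasCompactSupport f)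
    (hint : ∫ x, f x ∂vol = 1)
    (C : ℝ) (hC : ∀ y : G, ∑' t : Λ, f (y - ↑t) ≤ C) :
    uudens vol A Λ ≤ ENNReal.ofReal C ∧ uudens vol A Λ < ⊤ := by
  have hC0 : 0 ≤ C := le_trans (tsum_nonneg (fun t => hf0 _)) (hC 0)
  obtain ⟨hAc, hAi, hAu, hAvh⟩ := hA
  set K := tsupport f with hKdef
  have hKc : IsCompact K := hfs
  have hmono : Monotone A := monotone_nat_of_le_succ (fun n => (hAi n).trans interior_subset)
  -- eventual positivity of vol (A n)
  obtain ⟨n0, hn0⟩ : ∃ n0, (0 : G) ∈ A n0 := by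
    have := hAu ▸ Set.mem_univ (0 : G)
    simpa using Set.mem_iUnion.1 (hAu.symm ▸ Set.mem_univ (0 : G))
  have hpos : ∀ n, n0 + 1 ≤ n → vol (A n) ≠ 0 := by
    intro n hn
    have h1 : 0 < vol (interior (A (n0 + 1))) :=
      (isOpen_interior).measure_pos vol ⟨0, hAi n0 hn0⟩
    have h2 : interior (A (n0 + 1)) ⊆ A n := interior_subset.trans (hmono hn)
    exact (h1.trans_le (measure_mono h2)).ne'
  have main : uudens vol A Λ ≤ ENNReal.ofReal C := by
    apply ENNReal.le_of_forall_pos_le_add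
    intro ε hε _
    set δ : ℝ := ε / (C + 1) with hδdef
    have hδ : 0 < δ := div_pos hε (by linarith)
    have hev1 : ∀ᶠ n in atTop,
        (vol (kBoundary K (A n))).toReal / (vol (A n)).toReal < δ :=
      (hAvh K hKc).eventually_lt_const hδ
    have hev : ∀ᶠ n in atTop,
        (⨆ x : G, ((Λ ∩ (fun a => x + a) '' A n).ncard : ENNReal) / vol (A n))
          ≤ ENNReal.ofReal C + ε := by
      filter_upwards [hev1, eventually_ge_atTop (n0 + 1)] with n hr hn
      set a := vol (A n) with hadef
      set b := vol (kBoundary K (A n)) with hbdef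
      have ha0 : a ≠ 0 := hpos n hn
      have haT : a ≠ ⊤ := (hAc n).measure_lt_top.ne
      have hBKc : IsCompact (A n + K) := (hAc n).add hKc
      have hBKT : vol (A n + K) ≠ ⊤ := hBKc.measure_lt_top.ne
      have hbT : b ≠ ⊤ := by
        have hsub : kBoundary K (A n) ⊆ closure (A n + K) ∪ A n := by
          apply Set.union_subset
          · exact (closure_mono Set.diff_subset).trans Set.subset_union_left
          · exact Set.inter_subset_left.trans Set.subset_union_right
        refine ((measure_mono hsub).trans_lt ?_).ne
        exact (measure_union_le _ _).trans_lt
          (ENNReal.add_lt_top.2 ⟨hBKc.closure.measure_lt_top, (hAc n).measure_lt_top⟩)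
      -- b ≤ ofReal δ * a
      have hba : b ≤ ENNReal.ofReal δ * a := by
        have haR : 0 < a.toReal := ENNReal.toReal_pos ha0 haT
        have h1 : b.toReal ≤ δ * a.toReal := by
          rw [div_lt_iff₀ haR] at hr
          exact hr.le
        calc b = ENNReal.ofReal b.toReal := (ENNReal.ofReal_toReal hbT).symm
          _ ≤ ENNReal.ofReal (δ * a.toReal) := ENNReal.ofReal_le_ofReal h1
          _ = ENNReal.ofReal δ * ENNReal.ofReal a.toReal := ENNReal.ofReal_mul hδ.le
          _ = ENNReal.ofReal δ * a := by rw [ENNReal.ofReal_toReal haT]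
      -- vol (A n + K) ≤ (1 + ofReal δ) * a
      have hAnK : vol (A n + K) ≤ (1 + ENNReal.ofReal δ) * a := by
        have hsub : A n + K ⊆ A n ∪ kBoundary K (A n) := by
          intro y hy
          by_cases h : y ∈ A n
          · exact Or.inl h
          · exact Or.inr (Or.inl (subset_closure ⟨hy, h⟩))
        calc vol (A n + K) ≤ vol (A n ∪ kBoundary K (A n)) := measure_mono hsub
          _ ≤ a + b := measure_union_le _ _
          _ ≤ a + ENNReal.ofReal δ * a := add_le_add_right hba a
          _ = (1 + ENNReal.ofReal δ) * a := by ring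
      refine iSup_le fun x => ?_
      have hcard := aux_card_le vol Λ hwud f hf0 hfc hfs hint C hC (A n) (hAc n) x
      have hcE : ((Λ ∩ (fun a => x + a) '' A n).ncard : ENNReal)
          ≤ ENNReal.ofReal C * vol (A n + K) := by
        calc ((Λ ∩ (fun a => x + a) '' A n).ncard : ENNReal)
            = ENNReal.ofReal ((Λ ∩ (fun a => x + a) '' A n).ncard : ℝ) := by
              rw [ENNReal.ofReal_natCast]
          _ ≤ ENNReal.ofReal (C * (vol (A n + K)).toReal) := ENNReal.ofReal_le_ofReal hcard
          _ = ENNReal.ofReal C * ENNReal.ofReal (vol (A n + K)).toReal :=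
              ENNReal.ofReal_mul hC0
          _ = ENNReal.ofReal C * vol (A n + K) := by rw [ENNReal.ofReal_toReal hBKT]
      calc ((Λ ∩ (fun a => x + a) '' A n).ncard : ENNReal) / a
          ≤ ENNReal.ofReal C * vol (A n + K) / a := ENNReal.div_le_div_right hcE a
        _ ≤ ENNReal.ofReal C * ((1 + ENNReal.ofReal δ) * a) / a :=
            ENNReal.div_le_div_right (mul_le_mul_right hAnK _) a
        _ = ENNReal.ofReal C * (1 + ENNReal.ofReal δ) * (a / a) := by
            rw [← mul_assoc, mul_div_assoc]
        _ = ENNReal.ofReal C * (1 + ENNReal.ofReal δ) := by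
            rw [ENNReal.div_self ha0 haT, mul_one]
        _ = ENNReal.ofReal C + ENNReal.ofReal C * ENNReal.ofReal δ := by ring
        _ ≤ ENNReal.ofReal C + ε := by
            gcongr
            rw [← ENNReal.ofReal_mul hC0]
            have hle : C * δ ≤ (ε : ℝ) := by
              have hCδ : C * δ = C * (ε : ℝ) / (C + 1) := by rw [hδdef]; ring
              rw [hCδ, div_le_iff₀ (by linarith : (0:ℝ) < C + 1)]
              nlinarith [ε.coe_nonneg]
            calc ENNReal.ofReal (C * δ) ≤ ENNReal.ofReal (ε : ℝ) :=
                  ENNReal.ofReal_le_ofReal hle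
              _ = (ε : ENNReal) := ENNReal.ofReal_coe_nnreal
    exact Filter.limsup_le_of_le (h := hev)
  exact ⟨main, lt_of_le_of_lt main ENNReal.ofReal_lt_top⟩
end

section
/- Let μ be a positive definite pure point measure on a locally compact Abelian group G with μ ≠ 0, and set a(x) = μ({x}). Then a(0) is real and positive, and |a(x)| ≤ a(0) for all x ∈ G; in particular, if supp(μ) is uniformly discrete, then μ is translation bounded. -/
open Pointwise

/-- A positive definite function on an Abelian group: all Hermitian quadratic forms
`Σᵢⱼ cᵢ conj(cⱼ) a(xᵢ − xⱼ)` are real and nonnegative. -/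
def IsPositiveDefiniteFn {G : Type*} [AddCommGroup G] (a : G → ℂ) : Prop :=
  ∀ (n : ℕ) (x : Fin n → G) (c : Fin n → ℂ),
    0 ≤ (∑ i, ∑ j, c i * (starRingEnd ℂ) (c j) * a (x i - x j)).re ∧
    (∑ i, ∑ j, c i * (starRingEnd ℂ) (c j) * a (x i - x j)).im = 0

theorem key_bounds {G : Type*} [AddCommGroup G] (a : G → ℂ) (hpd : IsPositiveDefiniteFn a) :
    (a 0).im = 0 ∧ 0 ≤ (a 0).re ∧ ∀ x : G, ‖a x‖ ≤ (a 0).re := by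
  have h1 := hpd 1 ![0] ![1]
  simp [Fin.sum_univ_one] at h1
  refine ⟨h1.2, h1.1, fun x => ?_⟩
  have hs1 := (hpd 2 ![x, 0] ![1, 1]).2
  have hs2 := (hpd 2 ![x, 0] ![1, Complex.I]).2
  simp [Fin.sum_univ_two, sub_zero, zero_sub, h1.2] at hs1 hs2
  by_cases hx : a x = 0
  · simpa [hx] using h1.1
  · set n : ℝ := ‖a x‖ with hn
    have hn0 : 0 < n := by simpa [hn] using norm_pos_iff.mpr hx
    have hnsq : n ^ 2 = (a x).re ^ 2 + (a x).im ^ 2 := by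
      rw [hn, Complex.sq_norm, Complex.normSq_apply]; ring
    have h2 := (hpd 2 ![x, 0] ![1, ⟨-(a x).re / n, -(a x).im / n⟩]).1
    simp [Fin.sum_univ_two, sub_zero, zero_sub, h1.2] at h2
    have e1 : (a (-x)).re = (a x).re := by linarith [hs1, hs2]
    have e2 : (a (-x)).im = -(a x).im := by linarith [hs1, hs2]
    rw [e1, e2] at h2
    have hne' : n ≠ 0 := ne_of_gt hn0
    have key : -(a x).re / n * (a x).re + -(a x).im / n * (a x).im = -n := by
      field_simp
      nlinarith [hnsq]
    have key2 : -(a x).re / n * (-(a x).re / n) + -(a x).im / n * (-(a x).im / n) = 1 := by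
      field_simp
      nlinarith [hnsq]
    have key3 : -(a x).re / n * (a x).re - -(a x).im / n * -(a x).im = -n := by
      field_simp
      nlinarith [hnsq]
    rw [key, key2, key3, one_mul] at h2
    linarith

/-- For a nonzero positive definite pure point measure `μ = Σₓ a(x) δₓ` (encoded via its
positive definite coefficient function `a`), `a(0)` is real and positive, `|a(x)| ≤ a(0)`
for all `x`; and if the support of `a` is uniformly discrete, then `μ` is translation
bounded: for every compact `K`, the total mass of `|μ|` in any translate `y + K` is
uniformly bounded. -/
theorem posdef_pure_point_translation_bounded
    {G : Type*} [AddCommGroup G] [TopologicalSpace G] [IsTopologicalAddGroup G]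
    (a : G → ℂ) (hpd : IsPositiveDefiniteFn a) (hne : a ≠ 0) :
    ((a 0).im = 0 ∧ 0 < (a 0).re ∧ ∀ x : G, ‖a x‖ ≤ (a 0).re) ∧
    (∀ U : Set G, IsOpen U → (0 : G) ∈ U →
      (∀ x ∈ Function.support a, ∀ y ∈ Function.support a, x ≠ y →
        Disjoint ((fun u => x + u) '' U) ((fun u => y + u) '' U)) →
      ∀ K : Set G, IsCompact K → ∃ B : ℝ, ∀ y : G,
        ∑' x : ↥(Function.support a ∩ (fun k => y + k) '' K), ‖a ↑x‖ ≤ B) := by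
  obtain ⟨him, hre0, hbd⟩ := key_bounds a hpd
  have hpos : 0 < (a 0).re := by
    rcases lt_or_eq_of_le hre0 with h | h
    · exact h
    · exfalso; apply hne; funext x
      have hx := hbd x
      rw [← h] at hx
      simpa using norm_le_zero_iff.mp hx
  refine ⟨⟨him, hpos, hbd⟩, ?_⟩
  intro U hUopen hU0 hsep K hK
  obtain ⟨t, htK, hcov⟩ := hK.elim_nhds_subcover (fun k => (fun u => k + u) '' U)
    (fun k _ => ((isOpenMap_add_left k) U hUopen).mem_nhds ⟨0, hU0, add_zero k⟩)
  refine ⟨t.card * (a 0).re, fun y => ?_⟩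
  set S := Function.support a ∩ (fun k => y + k) '' K with hS
  have hmap : ∀ s : S, ∃ k, k ∈ t ∧ (s : G) ∈ (fun u => y + k + u) '' U := by
    rintro ⟨s, hsupp, k', hk'K, rfl⟩
    have hm := hcov hk'K
    rw [Set.mem_iUnion₂] at hm
    obtain ⟨k, hkt, u, huU, hku⟩ := hm
    have hku' : k + u = k' := hku
    exact ⟨k, hkt, u, huU, show y + k + u = y + k' by rw [← hku']; abel⟩
  choose f hf1 hf2 using hmap
  have hinj : Function.Injective (fun s : S => (⟨f s, hf1 s⟩ : {k // k ∈ t})) := by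
    intro s s' hss
    simp only [Subtype.mk.injEq] at hss
    by_contra hne'
    obtain ⟨u, huU, hu⟩ := hf2 s
    obtain ⟨u', huU', hu'⟩ := hf2 s'
    have h1 : (s : G) + u' = (s' : G) + u := by
      rw [← hu, ← hu', hss]; beta_reduce; abel
    have := hsep (s : G) s.2.1 (s' : G) s'.2.1
      (fun h => hne' (Subtype.ext h))
    exact (this.ne_of_mem ⟨u', huU', rfl⟩ ⟨u, huU, rfl⟩) h1
  haveI : Finite S := Finite.of_injective _ hinj
  haveI : Fintype S := Fintype.ofFinite S
  rw [tsum_fintype]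
  calc ∑ s : S, ‖a (s : G)‖ ≤ ∑ _s : S, (a 0).re :=
        Finset.sum_le_sum (fun s _ => hbd (s : G))
    _ = Fintype.card S * (a 0).re := by
        rw [Finset.sum_const, Finset.card_univ, nsmul_eq_mul]
    _ ≤ t.card * (a 0).re := by
        have hc : Fintype.card S ≤ t.card := by
          simpa [Fintype.card_coe] using Fintype.card_le_of_injective _ hinj
        exact mul_le_mul_of_nonneg_right (by exact_mod_cast hc) (le_of_lt hpos)
end

section
/- Let μ = Σ_{x∈Λ} a(x) δ_x be a nonzero positive definite, strongly almost periodic measure on a locally compact Abelian group G with uniformly discrete support Λ. Then for every ε > 0, the set B_ε = {x ∈ Λ : Re(a(x)) ≥ a(0) − ε} is relatively dense in G. -/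
open Pointwise

lemma aux_a0 {G : Type*} [AddCommGroup G] {a : G → ℂ} (hpd : IsPositiveDefiniteFn a) :
    0 ≤ (a 0).re ∧ (a 0).im = 0 := by
  have h := hpd 1 (fun _ => 0) (fun _ => 1)
  simpa using h

lemma aux_ne {G : Type*} [AddCommGroup G] {a : G → ℂ} (hpd : IsPositiveDefiniteFn a)
    (hne : a ≠ 0) : a 0 ≠ 0 := by
  intro h0
  apply hne
  funext x
  have h1 := hpd 2 ![0, x] ![1, 1]
  have h2 := hpd 2 ![0, x] ![1, -1]
  have h3 := hpd 2 ![0, x] ![1, Complex.I]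
  have h4 := hpd 2 ![0, x] ![1, -Complex.I]
  simp [Fin.sum_univ_two, h0, Complex.ext_iff, Complex.add_re, Complex.add_im,
    Complex.mul_re, Complex.mul_im] at h1 h2 h3 h4
  show a x = 0
  rw [Complex.ext_iff]
  constructor <;> simp <;> linarith [h1.1, h1.2, h2.1, h2.2, h3.1, h3.2, h4.1, h4.2]

/-- A set `S` is relatively dense if `S + K = G` for some compact `K`. -/
def RelativelyDense {G : Type*} [AddCommGroup G] [TopologicalSpace G] (S : Set G) : Prop :=
  ∃ K : Set G, IsCompact K ∧ S + K = Set.univ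

/-- For a nonzero positive definite, strongly almost periodic measure
`μ = Σ_{x∈Λ} a(x) δₓ` with uniformly discrete support `Λ`, the set
`B_ε = {x ∈ Λ : Re a(x) ≥ a(0) − ε}` is relatively dense for every `ε > 0`.
Strong almost periodicity is encoded via Bohr almost periodicity of every
convolution `μ * g`, `g ∈ C_c(G)`, where `(μ * g)(y) = Σ_{x∈Λ} a(x) g(y − x)`. -/
theorem relDense_of_posdef_sap
    {G : Type*} [AddCommGroup G] [TopologicalSpace G] [IsTopologicalAddGroup G]
    [LocallyCompactSpace G]
    (Λ : Set G) (a : G → ℂ)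
    (hsupp : ∀ x ∉ Λ, a x = 0)
    (hud : ∃ U : Set G, IsOpen U ∧ (0 : G) ∈ U ∧ ∀ x ∈ Λ, ∀ y ∈ Λ, x ≠ y →
      Disjoint ((fun u => x + u) '' U) ((fun u => y + u) '' U))
    (hpd : IsPositiveDefiniteFn a) (hne : a ≠ 0)
    (hsap : ∀ g : G → ℂ, Continuous g → HasCompactSupport g → ∀ ε > (0 : ℝ),
      RelativelyDense {t : G | ∀ y : G,
        ‖(∑' x : Λ, a ↑x * g (y - t - ↑x)) - ∑' x : Λ, a ↑x * g (y - ↑x)‖ ≤ ε}) :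
    ∀ ε > (0 : ℝ), RelativelyDense {x ∈ Λ | (a 0).re - ε ≤ (a x).re} := by
  intro ε hε
  obtain ⟨U, hUopen, hU0, hUdisj⟩ := hud
  obtain ⟨C, hCcomp, hCnhds⟩ := exists_compact_mem_nhds (0 : G)
  set V := interior C ∩ U with hVdef
  have hVopen : IsOpen V := isOpen_interior.inter hUopen
  have hV0 : (0 : G) ∈ V := ⟨mem_interior_iff_mem_nhds.mpr hCnhds, hU0⟩
  obtain ⟨f, hf1, hf0, hfc, hf01⟩ :=
    exists_continuous_one_zero_of_isCompact (isCompact_singleton (x := (0 : G)))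
      hVopen.isClosed_compl (by simpa [Set.disjoint_singleton_left] using hV0)
  set g : G → ℂ := fun y => ((f y : ℝ) : ℂ) with hgdef
  have hgcont : Continuous g := Complex.continuous_ofReal.comp f.continuous
  have hgsupp : HasCompactSupport g :=
    hfc.comp_left (g := fun r : ℝ => (r : ℂ)) (by simp)
  have ha0 := aux_a0 hpd
  have ha0ne := aux_ne hpd hne
  have ha0pos : 0 < (a 0).re := by
    rcases lt_or_eq_of_le ha0.1 with h | h
    · exact h
    · exact absurd (Complex.ext h.symm ha0.2) ha0ne
  set ε' := min ε ((a 0).re / 2) with hε'def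
  have hε'pos : 0 < ε' := lt_min hε (by linarith)
  have hε'le : ε' ≤ ε := min_le_left _ _
  have hε'half : ε' ≤ (a 0).re / 2 := min_le_right _ _
  obtain ⟨K, hKcomp, hKuniv⟩ := hsap g hgcont hgsupp ε' hε'pos
  have h0Λ : (0 : G) ∈ Λ := by
    by_contra h
    exact ha0ne (hsupp 0 h)
  have hgV : ∀ y : G, g y ≠ 0 → y ∈ V := by
    intro y hy
    by_contra h
    exact hy (by simp [hgdef, hf0 h])
  have huniq : ∀ t : G, ∀ b₁ ∈ Λ, ∀ b₂ ∈ Λ, t - b₁ ∈ U → t - b₂ ∈ U → b₁ = b₂ := by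
    intro t b₁ hb₁ b₂ hb₂ h1 h2
    by_contra hne'
    have ht1 : t ∈ (fun u => b₁ + u) '' U := ⟨t - b₁, h1, by simp⟩
    have ht2 : t ∈ (fun u => b₂ + u) '' U := ⟨t - b₂, h2, by simp⟩
    exact Set.disjoint_left.mp (hUdisj b₁ hb₁ b₂ hb₂ hne') ht1 ht2
  refine ⟨C + K, hCcomp.add hKcomp, ?_⟩
  apply Set.eq_univ_of_forall
  intro z
  have hz : z ∈ {t : G | ∀ y : G,
      ‖(∑' x : Λ, a ↑x * g (y - t - ↑x)) - ∑' x : Λ, a ↑x * g (y - ↑x)‖ ≤ ε'} + K := by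
    rw [hKuniv]; trivial
  obtain ⟨p, hp, k, hk, rfl⟩ := Set.mem_add.mp hz
  have h := hp p
  -- first tsum equals a 0
  have hT1 : (∑' x : Λ, a ↑x * g (p - p - ↑x)) = a 0 := by
    rw [tsum_eq_single (⟨0, h0Λ⟩ : Λ)]
    · have hf00 : f 0 = 1 := hf1 rfl
      simp [hgdef, hf00]
    · intro b hb
      by_cases hgb : g (p - p - ↑b) = 0
      · rw [hgb, mul_zero]
      · exfalso
        have hbV : p - p - ↑b ∈ V := hgV _ hgb
        have hbU : (0 : G) - ↑b ∈ U := by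
          have := hbV.2
          simpa [sub_self] using this
        have h0U : (0 : G) - 0 ∈ U := by simpa using hU0
        have : (b : G) = 0 := huniq 0 b b.2 0 h0Λ hbU h0U
        exact hb (Subtype.ext this)
  rw [hT1] at h
  by_cases hex : ∃ x : Λ, a ↑x * g (p - ↑x) ≠ 0
  · obtain ⟨x₁, hx₁⟩ := hex
    have hg1 : g (p - ↑x₁) ≠ 0 := fun hc => hx₁ (by simp [hc])
    have hV1 : p - ↑x₁ ∈ V := hgV _ hg1
    have hT2 : (∑' x : Λ, a ↑x * g (p - ↑x)) = a ↑x₁ * g (p - ↑x₁) := by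
      apply tsum_eq_single
      intro b hb
      by_cases hgb : g (p - ↑b) = 0
      · rw [hgb, mul_zero]
      · exfalso
        exact hb (Subtype.ext (huniq p b b.2 x₁ x₁.2 (hgV _ hgb).2 hV1.2))
    rw [hT2] at h
    set r := f (p - ↑x₁) with hrdef
    have hr01 : r ∈ Set.Icc (0 : ℝ) 1 := hf01 _
    have hre : (a 0 - a ↑x₁ * g (p - ↑x₁)).re = (a 0).re - (a ↑x₁).re * r := by
      simp [hgdef, Complex.sub_re, Complex.mul_re, hrdef]
    have habs : |(a 0 - a ↑x₁ * g (p - ↑x₁)).re| ≤ ε' :=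
      le_trans (Complex.abs_re_le_norm _) h
    have key : (a 0).re - ε' ≤ (a ↑x₁).re * r := by
      rw [hre] at habs
      have := abs_le.mp habs
      linarith [this.1, this.2]
    have hwpos : 0 ≤ (a ↑x₁).re := by
      rcases le_or_gt 0 (a ↑x₁).re with hw | hw
      · exact hw
      · exfalso
        have : (a ↑x₁).re * r ≤ 0 := mul_nonpos_of_nonpos_of_nonneg hw.le hr01.1
        linarith
    have hfin : (a 0).re - ε' ≤ (a ↑x₁).re := by
      have : (a ↑x₁).re * r ≤ (a ↑x₁).re := mul_le_of_le_one_right hwpos hr01.2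
      linarith
    have hx₁B : (↑x₁ : G) ∈ {x ∈ Λ | (a 0).re - ε ≤ (a x).re} :=
      ⟨x₁.2, by linarith⟩
    exact ⟨↑x₁, hx₁B, (p - ↑x₁) + k,
      Set.mem_add.mpr ⟨p - ↑x₁, interior_subset hV1.1, k, hk, rfl⟩, by abel⟩
  · exfalso
    push_neg at hex
    have hT2 : (∑' x : Λ, a ↑x * g (p - ↑x)) = 0 := by
      have : (fun x : Λ => a ↑x * g (p - ↑x)) = fun _ => (0 : ℂ) := funext hex
      rw [this, tsum_zero]
    rw [hT2, sub_zero] at h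
    have : (a 0).re ≤ ε' := le_trans (Complex.re_le_norm _) h
    linarith
end

section
/- Let (ℝ^d, ℝ^n, 𝓛) be a cut and project scheme, i.e., 𝓛 is a lattice in ℝ^d × ℝ^n with π_{ℝ^d}|_𝓛 injective and π_{ℝ^n}(𝓛) dense in ℝ^n, and let W ⊆ ℝ^n be relatively compact with non-empty interior. If the model set ⧘(W) = {x ∈ π_{ℝ^d}(𝓛) : x* ∈ W} satisfies ⧘(W) ⊆ Γ + F for some lattice Γ ⊂ ℝ^d and finite set F ⊂ ℝ^d, then n = 0 and ⧘(W) is a lattice in ℝ^d. -/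
open Pointwise

section ModelSetAux

variable {d n : ℕ}

open scoped Classical

/-- The star map of a cut and project scheme: sends `z ∈ π₁(𝓛)` to the second coordinate of
its (unique) lift in `𝓛`; junk value `0` outside `π₁(𝓛)`. -/
noncomputable def cpsStar (L : AddSubgroup ((Fin d → ℝ) × (Fin n → ℝ))) (z : Fin d → ℝ) :
    Fin n → ℝ :=
  if h : ∃ w, (z, w) ∈ L then h.choose else 0

theorem cpsStar_eq (L : AddSubgroup ((Fin d → ℝ) × (Fin n → ℝ)))
    (hinj : ∀ p q : (Fin d → ℝ) × (Fin n → ℝ), p ∈ L → q ∈ L → p.1 = q.1 → p = q)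
    {z : Fin d → ℝ} {w : Fin n → ℝ} (h : (z, w) ∈ L) : cpsStar L z = w := by
  have hex : ∃ w, (z, w) ∈ L := ⟨w, h⟩
  have h2 := hinj (z, hex.choose) (z, w) hex.choose_spec h rfl
  rw [cpsStar, dif_pos hex]
  exact congrArg Prod.snd h2

theorem cpsStar_add (L : AddSubgroup ((Fin d → ℝ) × (Fin n → ℝ)))
    (hinj : ∀ p q : (Fin d → ℝ) × (Fin n → ℝ), p ∈ L → q ∈ L → p.1 = q.1 → p = q)
    {z₁ z₂ : Fin d → ℝ} (h₁ : ∃ w, (z₁, w) ∈ L) (h₂ : ∃ w, (z₂, w) ∈ L) :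
    cpsStar L (z₁ + z₂) = cpsStar L z₁ + cpsStar L z₂ := by
  obtain ⟨w₁, h₁⟩ := h₁
  obtain ⟨w₂, h₂⟩ := h₂
  have h3 : (z₁ + z₂, w₁ + w₂) ∈ L := add_mem h₁ h₂
  rw [cpsStar_eq L hinj h₁, cpsStar_eq L hinj h₂, cpsStar_eq L hinj h3]

set_option maxHeartbeats 1000000 in
/-- The main contradiction: if `n ≠ 0`, the hypotheses are inconsistent. -/
theorem model_set_aux (hn : n ≠ 0)
    (L : AddSubgroup ((Fin d → ℝ) × (Fin n → ℝ)))
    (hLcc : ∃ C : Set ((Fin d → ℝ) × (Fin n → ℝ)), IsCompact C ∧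
      (L : Set ((Fin d → ℝ) × (Fin n → ℝ))) + C = Set.univ)
    (hinj : ∀ p q : (Fin d → ℝ) × (Fin n → ℝ), p ∈ L → q ∈ L → p.1 = q.1 → p = q)
    (hdense : Dense (Prod.snd '' (L : Set ((Fin d → ℝ) × (Fin n → ℝ)))))
    (W : Set (Fin n → ℝ)) (hWc : IsCompact (closure W)) (hWint : (interior W).Nonempty)
    (Γ : AddSubgroup (Fin d → ℝ)) [DiscreteTopology ↥Γ]
    (F : Set (Fin d → ℝ)) (hF : F.Finite)
    (hsub : Prod.fst '' {p : (Fin d → ℝ) × (Fin n → ℝ) | p ∈ L ∧ p.2 ∈ W}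
      ⊆ (Γ : Set (Fin d → ℝ)) + F) : False := by
  classical
  obtain ⟨C, hCc, hCuniv⟩ := hLcc
  obtain ⟨w₀, hw₀⟩ := hWint
  obtain ⟨ρ, hρ, hball⟩ : ∃ ρ > 0, Metric.ball w₀ ρ ⊆ W := by
    obtain ⟨ρ, hρ, h⟩ := Metric.isOpen_iff.mp isOpen_interior w₀ hw₀
    exact ⟨ρ, hρ, h.trans interior_subset⟩
  set P : Set (Fin d → ℝ) := Prod.fst '' {p : (Fin d → ℝ) × (Fin n → ℝ) | p ∈ L ∧ p.2 ∈ W}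
    with hP
  -- P consists of points of π₁ L
  have hPmem : ∀ x ∈ P, (∃ w, (x, w) ∈ L ∧ w ∈ W) := by
    rintro x ⟨p, ⟨hpL, hpW⟩, rfl⟩
    exact ⟨p.2, by simpa using hpL, hpW⟩
  -- bound for C
  obtain ⟨MC, hMC⟩ := hCc.isBounded.exists_norm_le
  -- finite subcover for the internal space part
  have hcov : (Prod.snd '' C) ⊆ ⋃ (p : ↥L), Metric.ball (p.val.2) ρ := by
    rintro v hv
    obtain ⟨u, ⟨q, hq, rfl⟩, hd⟩ := Metric.mem_closure_iff.mp (hdense v) ρ hρ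
    exact Set.mem_iUnion.mpr ⟨⟨q, hq⟩, by simpa [Metric.mem_ball, dist_comm] using hd⟩
  obtain ⟨t, ht⟩ := (hCc.image continuous_snd).elim_finite_subcover
    (fun p : ↥L => Metric.ball (p.val.2) ρ) (fun p => Metric.isOpen_ball) hcov
  set M : NNReal := t.sup fun p => ‖p.val.1‖₊ with hM
  set R : ℝ := MC + M with hR
  -- relative density of P
  have hrel : ∀ x : Fin d → ℝ, ∃ z, z ∈ P ∧ ‖x - z‖ ≤ R := by
    intro x
    have hx : (x, w₀) ∈ (L : Set ((Fin d → ℝ) × (Fin n → ℝ))) + C := by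
      rw [hCuniv]; trivial
    obtain ⟨a, ha, c, hc, hac⟩ := Set.mem_add.mp hx
    have hc2 : c.2 ∈ Prod.snd '' C := ⟨c, hc, rfl⟩
    obtain ⟨p, hpt, hpc⟩ := Set.mem_iUnion₂.mp (ht hc2)
    have hq : (a.1 + p.val.1, a.2 + p.val.2) ∈ L := add_mem ha p.2
    have ha2 : a.2 + c.2 = w₀ := congrArg Prod.snd hac
    have ha1 : a.1 + c.1 = x := congrArg Prod.fst hac
    have hw : a.2 + p.val.2 ∈ Metric.ball w₀ ρ := by
      have hd : dist (a.2 + p.val.2) w₀ = dist p.val.2 c.2 := by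
        rw [dist_eq_norm, dist_eq_norm, ← ha2]
        congr 1
        abel
      rw [Metric.mem_ball, hd, dist_comm]
      exact Metric.mem_ball.mp hpc
    refine ⟨a.1 + p.val.1, ⟨(a.1 + p.val.1, a.2 + p.val.2), ⟨hq, hball hw⟩, rfl⟩, ?_⟩
    have hxz : x - (a.1 + p.val.1) = c.1 - p.val.1 := by rw [← ha1]; abel
    rw [hxz]
    calc ‖c.1 - p.val.1‖ ≤ ‖c.1‖ + ‖p.val.1‖ := norm_sub_le _ _
      _ ≤ MC + M := by
          gcongr
          · exact le_trans (norm_fst_le c) (hMC c hc)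
          · have h5 := Finset.le_sup (f := fun p : ↥L => ‖p.val.1‖₊) hpt
            exact_mod_cast h5
  -- the ball around w₀ is infinite
  haveI : Nonempty (Fin n) := ⟨⟨0, Nat.pos_of_ne_zero hn⟩⟩
  have hBallInf : (Metric.ball w₀ ρ).Infinite := by
    apply Set.infinite_of_injective_forall_mem
      (f := fun k : ℕ => w₀ + (ρ / (k + 2)) • (fun _ => 1 : Fin n → ℝ))
    · intro k j hkj
      have h2 := add_left_cancel hkj
      have h3 : ((ρ / (k + 2) : ℝ) - ρ / (j + 2)) • (fun _ => 1 : Fin n → ℝ) = 0 := by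
        rw [sub_smul, h2, sub_self]
      have h1 : (ρ / (k + 2) : ℝ) = ρ / (j + 2) := by
        rcases smul_eq_zero.mp h3 with h | h
        · linarith [sub_eq_zero.mp h]
        · exact absurd (congrFun h ⟨0, Nat.pos_of_ne_zero hn⟩) one_ne_zero
      have hk2 : (0:ℝ) < (k : ℝ) + 2 := by positivity
      have hj2 : (0:ℝ) < (j : ℝ) + 2 := by positivity
      have hkj2 : ((k : ℝ)) = j := by
        rw [div_eq_div_iff hk2.ne' hj2.ne'] at h1
        have := mul_left_cancel₀ (ne_of_gt hρ) (by linarith : ρ * ((j:ℝ) + 2) = ρ * ((k:ℝ) + 2))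
        linarith
      exact_mod_cast hkj2
    · intro k
      have hs : (0:ℝ) < ρ / (k + 2) := by positivity
      have hone : ‖(fun _ => 1 : Fin n → ℝ)‖ = 1 := by
        rw [show (fun _ => 1 : Fin n → ℝ) = (1 : Fin n → ℝ) from rfl]
        exact norm_one
      have hnorm : ‖(ρ / ((k:ℝ) + 2)) • (fun _ => 1 : Fin n → ℝ)‖ = ρ / (k + 2) := by
        rw [norm_smul, hone, mul_one, Real.norm_eq_abs, abs_of_pos hs]
      rw [Metric.mem_ball, dist_comm, dist_eq_norm]
      have : w₀ + (ρ / ((k:ℝ) + 2)) • (fun _ => 1 : Fin n → ℝ) - w₀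
          = (ρ / ((k:ℝ) + 2)) • (fun _ => 1 : Fin n → ℝ) := by abel
      rw [show w₀ - (w₀ + (ρ / ((k:ℝ) + 2)) • (fun _ => 1 : Fin n → ℝ))
          = -((ρ / ((k:ℝ) + 2)) • (fun _ => 1 : Fin n → ℝ)) by abel, norm_neg, hnorm]
      have hk0 : (0:ℝ) ≤ (k:ℝ) := Nat.cast_nonneg k
      refine div_lt_self hρ (by linarith)
  -- star values near w₀ are infinite
  have hkey : Metric.ball w₀ ρ ⊆
      closure {v | v ∈ Metric.ball w₀ ρ ∧ ∃ z, (z, v) ∈ L} := by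
    intro u hu
    rw [Metric.mem_closure_iff]
    intro ε hε
    have hδ : 0 < min ε (ρ - dist u w₀) := by
      rw [Metric.mem_ball] at hu
      exact lt_min hε (by linarith)
    obtain ⟨b, ⟨q, hq, rfl⟩, hd⟩ := Metric.mem_closure_iff.mp (hdense u) _ hδ
    refine ⟨q.2, ⟨?_, q.1, by simpa using hq⟩, lt_of_lt_of_le hd (min_le_left _ _)⟩
    rw [Metric.mem_ball]
    calc dist q.2 w₀ ≤ dist q.2 u + dist u w₀ := dist_triangle _ _ _
      _ < (ρ - dist u w₀) + dist u w₀ := by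
          have := lt_of_lt_of_le hd (min_le_right _ _)
          rw [dist_comm] at this
          exact add_lt_add_of_lt_of_le this le_rfl
      _ = ρ := by ring
  have hSinf : {v | v ∈ Metric.ball w₀ ρ ∧ ∃ z, (z, v) ∈ L}.Infinite := by
    intro hfin
    exact hBallInf (hfin.subset (hkey.trans (by rw [hfin.isClosed.closure_eq])))
  -- the subgroup G = Γ ⊓ π₁ L, as a ℤ-submodule
  set Gsub : Submodule ℤ (Fin d → ℝ) :=
    AddSubgroup.toIntSubmodule (Γ ⊓ L.map (AddMonoidHom.fst (Fin d → ℝ) (Fin n → ℝ))) with hGsub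
  have hGsub_mem : ∀ z : Fin d → ℝ, z ∈ Gsub ↔ (z ∈ Γ ∧ ∃ w, (z, w) ∈ L) := by
    intro z
    constructor
    · intro hz
      obtain ⟨h1, h2⟩ := AddSubgroup.mem_inf.mp hz
      obtain ⟨x, hx, hfx⟩ := AddSubgroup.mem_map.mp h2
      refine ⟨h1, x.2, ?_⟩
      have : (z, x.2) = x := Prod.ext hfx.symm rfl
      rw [this]; exact hx
    · rintro ⟨h1, w, h2⟩
      exact AddSubgroup.mem_inf.mpr ⟨h1, AddSubgroup.mem_map.mpr ⟨(z, w), h2, rfl⟩⟩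
  haveI hGdisc : DiscreteTopology ↥Gsub := by
    have hsubset : (Gsub : Set (Fin d → ℝ)) ⊆ (Γ : Set (Fin d → ℝ)) :=
      fun z hz => ((hGsub_mem z).mp hz).1
    exact DiscreteTopology.of_subset (inferInstance : DiscreteTopology ↥Γ) hsubset
  -- the span of G and the projected lattice
  set V : Submodule ℝ (Fin d → ℝ) := Submodule.span ℝ (Gsub : Set (Fin d → ℝ)) with hV
  set f : ↥V →ₗ[ℝ] (Fin d → ℝ) := V.subtype with hf
  set G₀ : Submodule ℤ ↥V := Gsub.comap (f.restrictScalars ℤ) with hG₀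
  haveI hG₀disc : DiscreteTopology ↥G₀ := by
    refine DiscreteTopology.preimage_of_continuous_injective (Gsub : Set (Fin d → ℝ)) ?_
      (Submodule.injective_subtype V)
    exact LinearMap.continuous_of_finiteDimensional f
  have h_img : f '' (G₀ : Set ↥V) = (Gsub : Set (Fin d → ℝ)) := by
    rw [← LinearMap.coe_restrictScalars ℤ f, ← Submodule.map_coe (f.restrictScalars ℤ),
      Submodule.map_comap_eq_self]
    exact fun x hx => LinearMap.mem_range.mpr ⟨⟨x, Submodule.subset_span hx⟩, rfl⟩
  haveI hG₀lat : IsZLattice ℝ G₀ := by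
    refine ⟨?_⟩
    apply Submodule.map_injective_of_injective (Submodule.injective_subtype V)
    rw [Submodule.map_span, Submodule.map_top, Submodule.range_subtype]
    show Submodule.span ℝ (V.subtype '' (G₀ : Set ↥V)) = V
    rw [show V.subtype '' (G₀ : Set ↥V) = (Gsub : Set (Fin d → ℝ)) from h_img]
  haveI : Module.Finite ℤ ↥G₀ := ZLattice.module_finite ℝ G₀
  haveI : Module.Free ℤ ↥G₀ := ZLattice.module_free ℝ G₀
  set b : Module.Basis (Module.Free.ChooseBasisIndex ℤ ↥G₀) ℤ ↥G₀ := Module.Free.chooseBasis ℤ ↥G₀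
    with hb
  set e : Module.Basis (Module.Free.ChooseBasisIndex ℤ ↥G₀) ℝ ↥V := b.ofZLatticeBasis ℝ G₀ with he
  set σ₀ : ↥V →ₗ[ℝ] (Fin n → ℝ) :=
    e.constr ℝ (fun i => cpsStar L ((b i : ↥V) : Fin d → ℝ)) with hσ₀
  obtain ⟨Q, hQ⟩ := Submodule.exists_isCompl V
  set π : (Fin d → ℝ) →ₗ[ℝ] ↥V := V.linearProjOfIsCompl Q hQ with hπdef
  set σ : (Fin d → ℝ) →ₗ[ℝ] (Fin n → ℝ) := σ₀.comp π with hσdef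
  -- σ agrees with the star map on G
  have hG₀star : ∀ y : ↥G₀, ∃ w, (((y : ↥V) : Fin d → ℝ), w) ∈ L := by
    intro y
    exact ((hGsub_mem _).mp y.2).2
  have hσG : ∀ z : Fin d → ℝ, z ∈ Gsub → σ z = cpsStar L z := by
    intro z hz
    have hzV : z ∈ V := Submodule.subset_span hz
    have hπz : π z = ⟨z, hzV⟩ := Submodule.linearProjOfIsCompl_apply_left hQ ⟨z, hzV⟩
    set x : ↥G₀ := ⟨⟨z, hzV⟩, by exact hz⟩ with hx
    have hΨadd : ∀ y₁ y₂ : ↥G₀,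
        cpsStar L (((y₁ + y₂ : ↥G₀) : ↥V) : Fin d → ℝ)
          = cpsStar L (((y₁ : ↥G₀) : ↥V) : Fin d → ℝ)
            + cpsStar L (((y₂ : ↥G₀) : ↥V) : Fin d → ℝ) := by
      intro y₁ y₂
      have : (((y₁ + y₂ : ↥G₀) : ↥V) : Fin d → ℝ)
          = (((y₁ : ↥G₀) : ↥V) : Fin d → ℝ) + (((y₂ : ↥G₀) : ↥V) : Fin d → ℝ) := rfl
      rw [this, cpsStar_add L hinj (hG₀star y₁) (hG₀star y₂)]
    set Ψ : ↥G₀ →+ (Fin n → ℝ) :=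
      AddMonoidHom.mk' (fun y => cpsStar L (((y : ↥G₀) : ↥V) : Fin d → ℝ)) hΨadd with hΨ
    set Φ : ↥G₀ →+ (Fin n → ℝ) :=
      AddMonoidHom.mk' (fun y => σ₀ ((y : ↥G₀) : ↥V)) (by intro y₁ y₂; simp) with hΦ
    have hbase : ∀ i, Φ (b i) = Ψ (b i) := by
      intro i
      show σ₀ ((b i : ↥G₀) : ↥V) = cpsStar L ((b i : ↥V) : Fin d → ℝ)
      conv_lhs => rw [show ((b i : ↥G₀) : ↥V) = e i from (b.ofZLatticeBasis_apply ℝ G₀ i).symm]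
      exact e.constr_basis ℝ _ i
    have hsum := b.sum_repr x
    have hΦΨ : Φ x = Ψ x := by
      rw [← hsum, map_sum, map_sum]
      exact Finset.sum_congr rfl fun i _ => by rw [map_zsmul, map_zsmul, hbase]
    have hΦx : Φ x = σ₀ ⟨z, hzV⟩ := rfl
    have hΨx : Ψ x = cpsStar L z := rfl
    calc σ z = σ₀ (π z) := rfl
      _ = σ₀ ⟨z, hzV⟩ := by rw [hπz]
      _ = cpsStar L z := by rw [← hΦx, hΦΨ, hΨx]
  -- the displacement function takes finitely many values on P
  have hsingle : ∀ g ∈ F, ((fun z => cpsStar L z - σ z) ''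
      (P ∩ {x | x - g ∈ Γ})).Subsingleton := by
    intro g _
    rintro u ⟨x, ⟨hxP, hxΓ⟩, rfl⟩ v ⟨y, ⟨hyP, hyΓ⟩, rfl⟩
    show cpsStar L x - σ x = cpsStar L y - σ y
    obtain ⟨wx, hwxL, _⟩ := hPmem x hxP
    obtain ⟨wy, hwyL, _⟩ := hPmem y hyP
    have hxyΓ : x - y ∈ Γ := by
      have : x - y = (x - g) - (y - g) := by abel
      rw [this]; exact sub_mem hxΓ hyΓ
    have hxyL : (x - y, wx - wy) ∈ L := by
      have : ((x, wx) : (Fin d → ℝ) × (Fin n → ℝ)) - (y, wy) = (x - y, wx - wy) := rfl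
      rw [← this]; exact sub_mem hwxL hwyL
    have hxyG : x - y ∈ Gsub := (hGsub_mem _).mpr ⟨hxyΓ, wx - wy, hxyL⟩
    have h1 : σ (x - y) = cpsStar L (x - y) := hσG _ hxyG
    have h2 : cpsStar L (x - y) = wx - wy := cpsStar_eq L hinj hxyL
    have h3 : cpsStar L x = wx := cpsStar_eq L hinj hwxL
    have h4 : cpsStar L y = wy := cpsStar_eq L hinj hwyL
    have h5 : σ x - σ y = wx - wy := by rw [← map_sub, h1, h2]
    rw [h3, h4]
    exact sub_eq_sub_iff_sub_eq_sub.mpr h5.symm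
  have hDfin : ((fun z => cpsStar L z - σ z) '' P).Finite := by
    have hcover : ((fun z => cpsStar L z - σ z) '' P) ⊆
        ⋃ g ∈ F, (fun z => cpsStar L z - σ z) '' (P ∩ {x | x - g ∈ Γ}) := by
      rintro u ⟨x, hxP, rfl⟩
      obtain ⟨γ, hγ, g, hg, hγg⟩ := Set.mem_add.mp (hsub hxP)
      refine Set.mem_biUnion hg ⟨x, ⟨hxP, ?_⟩, rfl⟩
      show x - g ∈ Γ
      have : x - g = γ := by rw [← hγg]; abel
      rw [this]; exact hγ
    exact Set.Finite.subset (hF.biUnion (fun g hg => ((hsingle g hg).finite))) hcover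
  -- σ is bounded on P
  obtain ⟨BW, hBW⟩ := hWc.isBounded.exists_norm_le
  obtain ⟨BD, hBD⟩ := hDfin.isBounded.exists_norm_le
  have hσBound : ∀ z ∈ P, ‖σ z‖ ≤ BW + BD := by
    intro z hz
    obtain ⟨w, hwL, hwW⟩ := hPmem z hz
    have h3 : cpsStar L z = w := cpsStar_eq L hinj hwL
    have h6 : ‖σ z‖ ≤ ‖cpsStar L z‖ + ‖cpsStar L z - σ z‖ := by
      have h7 := norm_sub_le (cpsStar L z) (cpsStar L z - σ z)
      rwa [sub_sub_cancel] at h7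
    refine h6.trans (add_le_add ?_ (hBD _ ⟨z, hz, rfl⟩))
    rw [h3]
    exact hBW w (subset_closure hwW)
  -- σ is nonzero
  have hσne : ∃ u, σ u ≠ 0 := by
    by_contra hc
    push_neg at hc
    have hSsub : {v | v ∈ Metric.ball w₀ ρ ∧ ∃ z, (z, v) ∈ L} ⊆
        (fun z => cpsStar L z - σ z) '' P := by
      rintro v ⟨hvball, z, hzL⟩
      have hzP : z ∈ P := ⟨(z, v), ⟨hzL, hball hvball⟩, rfl⟩
      refine ⟨z, hzP, ?_⟩
      show cpsStar L z - σ z = v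
      rw [hc z, sub_zero, cpsStar_eq L hinj hzL]
    exact hSinf (hDfin.subset hSsub)
  obtain ⟨u, hu⟩ := hσne
  -- final contradiction via relative density
  set σc : (Fin d → ℝ) →L[ℝ] (Fin n → ℝ) := LinearMap.toContinuousLinearMap σ with hσc
  have hσcσ : ∀ v, σc v = σ v := fun v => rfl
  set Cσ : ℝ := ‖σc‖ with hCσ
  have hσu : 0 < ‖σ u‖ := norm_pos_iff.mpr hu
  set s : ℝ := (BW + BD + Cσ * R + 1) / ‖σ u‖ with hs
  obtain ⟨z, hzP, hzR⟩ := hrel (s • u)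
  have h1 : ‖σ (s • u)‖ = |s| * ‖σ u‖ := by
    rw [map_smul, norm_smul, Real.norm_eq_abs]
  have h2 : s * ‖σ u‖ ≤ |s| * ‖σ u‖ := by
    apply mul_le_mul_of_nonneg_right (le_abs_self s) (norm_nonneg _)
  have h3 : s * ‖σ u‖ = BW + BD + Cσ * R + 1 := by
    rw [hs, div_mul_cancel₀ _ (ne_of_gt hσu)]
  have h4 : ‖σ (s • u) - σ z‖ ≤ Cσ * R := by
    rw [← map_sub]
    calc ‖σ (s • u - z)‖ = ‖σc (s • u - z)‖ := by rw [hσcσ]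
      _ ≤ Cσ * ‖s • u - z‖ := σc.le_opNorm _
      _ ≤ Cσ * R := by
          apply mul_le_mul_of_nonneg_left hzR (norm_nonneg σc)
  have h5 : ‖σ (s • u)‖ ≤ ‖σ z‖ + ‖σ (s • u) - σ z‖ := by
    have h7 : σ z + (σ (s • u) - σ z) = σ (s • u) := by abel
    calc ‖σ (s • u)‖ = ‖σ z + (σ (s • u) - σ z)‖ := by rw [h7]
      _ ≤ _ := norm_add_le _ _
  have h6 := hσBound z hzP
  rw [h1] at h5
  linarith [h2, h3, h4, h5, h6]

end ModelSetAux

/-- In a fully Euclidean cut and project scheme `(ℝ^d, ℝ^n, 𝓛)`, if a model set `⧘(W)`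
(with window `W` relatively compact with non-empty interior) is contained in finitely
many translates of a lattice `Γ ⊂ ℝ^d`, then `n = 0` and `⧘(W)` is itself a lattice. -/
theorem model_set_in_lattice_translates
    {d n : ℕ}
    (L : AddSubgroup ((Fin d → ℝ) × (Fin n → ℝ))) [DiscreteTopology ↥L]
    (hLcc : ∃ C : Set ((Fin d → ℝ) × (Fin n → ℝ)), IsCompact C ∧
      (L : Set ((Fin d → ℝ) × (Fin n → ℝ))) + C = Set.univ)
    (hinj : ∀ p q : (Fin d → ℝ) × (Fin n → ℝ), p ∈ L → q ∈ L → p.1 = q.1 → p = q)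
    (hdense : Dense (Prod.snd '' (L : Set ((Fin d → ℝ) × (Fin n → ℝ)))))
    (W : Set (Fin n → ℝ)) (hWc : IsCompact (closure W)) (hWint : (interior W).Nonempty)
    (Γ : AddSubgroup (Fin d → ℝ)) [DiscreteTopology ↥Γ]
    (hΓcc : ∃ C : Set (Fin d → ℝ), IsCompact C ∧ (Γ : Set (Fin d → ℝ)) + C = Set.univ)
    (F : Set (Fin d → ℝ)) (hF : F.Finite)
    (hsub : Prod.fst '' {p : (Fin d → ℝ) × (Fin n → ℝ) | p ∈ L ∧ p.2 ∈ W}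
      ⊆ (Γ : Set (Fin d → ℝ)) + F) :
    n = 0 ∧ ∃ Γ' : AddSubgroup (Fin d → ℝ),
      (Γ' : Set (Fin d → ℝ)) = Prod.fst '' {p : (Fin d → ℝ) × (Fin n → ℝ) | p ∈ L ∧ p.2 ∈ W} ∧
      DiscreteTopology ↥Γ' ∧
      ∃ C : Set (Fin d → ℝ), IsCompact C ∧ (Γ' : Set (Fin d → ℝ)) + C = Set.univ := by
  have hn : n = 0 := by
    by_contra hn0
    exact model_set_aux hn0 L hLcc hinj hdense W hWc hWint Γ F hF hsub
  refine ⟨hn, ?_⟩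
  subst hn
  haveI : Subsingleton (Fin 0 → ℝ) := ⟨fun a b => funext fun i => i.elim0⟩
  obtain ⟨wW, hwW⟩ := hWint
  have hwW' : wW ∈ W := interior_subset hwW
  refine ⟨L.map (AddMonoidHom.fst (Fin d → ℝ) (Fin 0 → ℝ)), ?_, ?_, ?_⟩
  · ext x
    simp only [AddSubgroup.coe_map, Set.mem_image, SetLike.mem_coe, Set.mem_setOf_eq]
    constructor
    · rintro ⟨p, hp, rfl⟩
      exact ⟨p, ⟨hp, by rw [Subsingleton.elim p.2 wW]; exact hwW'⟩, rfl⟩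
    · rintro ⟨p, ⟨hp, _⟩, rfl⟩
      exact ⟨p, hp, rfl⟩
  · -- discreteness, via the embedding into L
    have hmem : ∀ x : ↥(L.map (AddMonoidHom.fst (Fin d → ℝ) (Fin 0 → ℝ))),
        ((x : Fin d → ℝ), (fun _ => 0 : Fin 0 → ℝ)) ∈ L := by
      intro x
      obtain ⟨p, hp, h1⟩ := AddSubgroup.mem_map.mp x.2
      have : ((x : Fin d → ℝ), (fun _ => 0 : Fin 0 → ℝ)) = p :=
        Prod.ext h1.symm (Subsingleton.elim _ _)
      rw [this]; exact hp
    set j : ↥(L.map (AddMonoidHom.fst (Fin d → ℝ) (Fin 0 → ℝ))) → ↥L :=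
      fun x => ⟨((x : Fin d → ℝ), (fun _ => 0 : Fin 0 → ℝ)), hmem x⟩ with hj
    have hjcont : Continuous j := by
      apply Continuous.subtype_mk
      exact (continuous_subtype_val.prodMk continuous_const)
    have hjemb : Topology.IsEmbedding j := by
      refine Topology.IsEmbedding.of_comp hjcont continuous_subtype_val ?_
      have : (Subtype.val ∘ j) =
          (fun v : Fin d → ℝ => (v, (fun _ => 0 : Fin 0 → ℝ))) ∘ Subtype.val := rfl
      rw [this]
      apply Topology.IsEmbedding.comp ?_ Topology.IsEmbedding.subtypeVal
      have hlinv : Function.LeftInverse (Prod.fst)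
          (fun v : Fin d → ℝ => (v, (fun _ => 0 : Fin 0 → ℝ))) := fun v => rfl
      exact hlinv.isEmbedding continuous_fst (continuous_id.prodMk continuous_const)
    exact hjemb.discreteTopology
  · obtain ⟨C, hCc, hCuniv⟩ := hLcc
    refine ⟨Prod.fst '' C, hCc.image continuous_fst, ?_⟩
    rw [Set.eq_univ_iff_forall]
    intro x
    have hx : (x, (fun _ => 0 : Fin 0 → ℝ)) ∈ (L : Set ((Fin d → ℝ) × (Fin 0 → ℝ))) + C := by
      rw [hCuniv]; trivial
    obtain ⟨a, ha, c, hc, hac⟩ := Set.mem_add.mp hx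
    refine Set.mem_add.mpr ⟨a.1, ?_, c.1, ⟨c, hc, rfl⟩, congrArg Prod.fst hac⟩
    simp only [AddSubgroup.coe_map, Set.mem_image, SetLike.mem_coe]
    exact ⟨a, ha, rfl⟩
end
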